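/- (Equivalence of problems (15) and (21), first direction) Let (W_1,…,W_N, Q, t) be feasible for problem (21) with t ≥ 0. Define y_n := (θ_n(t)/(1+θ_n(t))) · (Tr(H_n(Σ_{k=1}^N W_k + Q)) + σ_{u,n}²)/Tr(H_n W_n), Ŵ_n := y_n W_n and Q̂ := Q + Σ_{k=1}^N (1 − y_k) W_k. Then (Ŵ_1,…,Ŵ_N, Q̂) is feasible for problem (15), its secrecy rates satisfy R̂^SEC_{u,n} = φ_n t for every n, and its secrecy energy efficiency equals t/P^TOT(W_1,…,W_N,Q); in particular the optimal value of (15) is at least t/P^TOT(W_1,…,W_N,Q). -/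

import Mathlib

open Matrix
open scoped ComplexOrder

/-- Real part of `Tr(A B)`. -/
noncomputable def trR {n : ℕ} (A B : Matrix (Fin n) (Fin n) ℂ) : ℝ :=
  (Matrix.trace (A * B)).re

/-- Euclidean (Frobenius) norm on ℂ^{N_t}. -/
noncomputable def enorm' {n : ℕ} (v : Fin n → ℂ) : ℝ :=
  Real.sqrt (∑ i, ‖v i‖ ^ 2)

/-- Outer product channel matrix `H_n = h_n h_nᴴ`. -/
noncomputable def Hmat {N Nt : ℕ} (h : Fin N → Fin Nt → ℂ) (n : Fin N) :
    Matrix (Fin Nt) (Fin Nt) ℂ :=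
  Matrix.vecMulVec (h n) (star (h n))

/-- Data rate `R_{u,n}` of user `n`. -/
noncomputable def Ru {N Nt : ℕ} (h : Fin N → Fin Nt → ℂ) (σsq : Fin N → ℝ) (BW : ℝ)
    (W : Fin N → Matrix (Fin Nt) (Fin Nt) ℂ) (Q : Matrix (Fin Nt) (Fin Nt) ℂ)
    (n : Fin N) : ℝ :=
  BW * Real.log (1 + trR (Hmat h n) (W n) /
    ((∑ k ∈ Finset.univ.erase n, trR (Hmat h n) (W k)) + trR (Hmat h n) Q + σsq n))

/-- Secrecy rate `R^SEC_{u,n}` of user `n`. -/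
noncomputable def Rsec {N Nt : ℕ} (h : Fin N → Fin Nt → ℂ) (σsq : Fin N → ℝ) (BW : ℝ)
    (Rreq : Fin N → ℝ) (W : Fin N → Matrix (Fin Nt) (Fin Nt) ℂ)
    (Q : Matrix (Fin Nt) (Fin Nt) ℂ) (n : Fin N) : ℝ :=
  max (Ru h σsq BW W Q n - Rreq n) 0

/-- Total power consumption `P^TOT`. -/
noncomputable def Ptot {N Nt : ℕ} (φamp Pcir : ℝ)
    (W : Fin N → Matrix (Fin Nt) (Fin Nt) ℂ) (Q : Matrix (Fin Nt) (Fin Nt) ℂ) : ℝ :=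
  (1 / φamp) * ((∑ n, (Matrix.trace (W n)).re) + (Matrix.trace Q).re) + Pcir

/-- Secrecy energy efficiency `SEE`. -/
noncomputable def SEE {N Nt : ℕ} (h : Fin N → Fin Nt → ℂ) (σsq : Fin N → ℝ) (BW : ℝ)
    (Rreq : Fin N → ℝ) (φamp Pcir : ℝ)
    (W : Fin N → Matrix (Fin Nt) (Fin Nt) ℂ) (Q : Matrix (Fin Nt) (Fin Nt) ℂ) : ℝ :=
  (∑ n, Rsec h σsq BW Rreq W Q n) / Ptot φamp Pcir W Q

/-- The robust information-leakage constraint for all pairs `(m, n)`. -/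
def LeakOK {N Nt M : ℕ} (BW : ℝ) (Rreq : Fin N → ℝ)
    (ge : Fin M → Fin Nt → ℂ) (Θe σe : Fin M → ℝ)
    (W : Fin N → Matrix (Fin Nt) (Fin Nt) ℂ) (Q : Matrix (Fin Nt) (Fin Nt) ℂ) : Prop :=
  ∀ m n, ∀ Δ : Fin Nt → ℂ, enorm' Δ ≤ Θe m →
    (star (ge m + Δ) ⬝ᵥ
      (((1 / (1 - Real.exp (-(Rreq n / BW))) : ℝ) : ℂ) • W n - (∑ k, W k) - Q).mulVec
        (ge m + Δ)).re ≤ σe m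

/-- The robust energy-harvesting constraint for all `i`. -/
def EHOK {Nt I : ℕ} (gh : Fin I → Fin Nt → ℂ) (Θh Preq ξ : Fin I → ℝ)
    {N : ℕ} (W : Fin N → Matrix (Fin Nt) (Fin Nt) ℂ)
    (Q : Matrix (Fin Nt) (Fin Nt) ℂ) : Prop :=
  ∀ i, ∀ Δ : Fin Nt → ℂ, enorm' Δ ≤ Θh i →
    Preq i / ξ i ≤ (star (gh i + Δ) ⬝ᵥ ((∑ k, W k) + Q).mulVec (gh i + Δ)).re

/-- Feasibility for problem (15). -/
noncomputable def Feasible15 {N Nt M I : ℕ}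
    (h : Fin N → Fin Nt → ℂ) (σsq : Fin N → ℝ) (BW : ℝ) (φv Rreq : Fin N → ℝ)
    (ge : Fin M → Fin Nt → ℂ) (Θe σe : Fin M → ℝ)
    (gh : Fin I → Fin Nt → ℂ) (Θh Preq ξ : Fin I → ℝ) (Pmax : ℝ)
    (W : Fin N → Matrix (Fin Nt) (Fin Nt) ℂ) (Q : Matrix (Fin Nt) (Fin Nt) ℂ) : Prop :=
  (∀ n, (W n).PosSemidef) ∧ Q.PosSemidef ∧
  (∀ n, (W n).rank ≤ 1) ∧
  (∀ m n, φv m * Rsec h σsq BW Rreq W Q n = φv n * Rsec h σsq BW Rreq W Q m) ∧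
  LeakOK BW Rreq ge Θe σe W Q ∧
  EHOK gh Θh Preq ξ W Q ∧
  (∑ n, (Matrix.trace (W n)).re) + (Matrix.trace Q).re ≤ Pmax

/-- Feasibility for problem (21). -/
noncomputable def Feasible21 {N Nt M I : ℕ}
    (h : Fin N → Fin Nt → ℂ) (σsq : Fin N → ℝ) (BW : ℝ) (φv Rreq : Fin N → ℝ)
    (ge : Fin M → Fin Nt → ℂ) (Θe σe : Fin M → ℝ)
    (gh : Fin I → Fin Nt → ℂ) (Θh Preq ξ : Fin I → ℝ) (Pmax : ℝ)
    (W : Fin N → Matrix (Fin Nt) (Fin Nt) ℂ) (Q : Matrix (Fin Nt) (Fin Nt) ℂ)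
    (t : ℝ) : Prop :=
  (∀ n, (W n).PosSemidef) ∧ Q.PosSemidef ∧
  (∀ n, (W n).rank ≤ 1) ∧
  (∀ n, ((1 + (Real.exp (φv n * t / BW + Rreq n / BW) - 1)) /
        (Real.exp (φv n * t / BW + Rreq n / BW) - 1)) * trR (Hmat h n) (W n) ≥
      (∑ k, trR (Hmat h n) (W k)) + trR (Hmat h n) Q + σsq n) ∧
  LeakOK BW Rreq ge Θe σe W Q ∧
  EHOK gh Θh Preq ξ W Q ∧
  (∑ n, (Matrix.trace (W n)).re) + (Matrix.trace Q).re ≤ Pmax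

/-!
Write `θₙ = exp(φₙ t / BW + R̃ₙ) - 1` and `Sₙ = Tr(Hₙ(∑ₖ Wₖ + Q)) + σ²_{u,n}`. Constraint (20) says
`Tr(Hₙ Wₙ) ≥ θₙ/(1+θₙ) · Sₙ`, so `yₙ ∈ (0, 1]`, and the rescaling only moves the part
`(1 - yₙ) Wₙ` of each beam into the artificial noise. The total covariance `∑ₖ Wₖ + Q` is unchanged,
hence so are the energy-harvesting, power-budget and total-power quantities, while the leakage
matrices `Xₙ` can only decrease. The useful power of user `n` becomes exactly `θₙ/(1+θₙ) · Sₙ`, so its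
SINR is `θₙ` and its secrecy rate is `BW log(1 + θₙ) - R^REQ_{e,n} = φₙ t`; summing with `∑ φₙ = 1`
gives the SEE `t / P^TOT`. Every rate is at most `BW log(1 + ‖hₙ‖² P^max / σ²_{u,n})` and
`P^TOT ≥ P^CIR`, so the SEE values of feasible points of (15) are bounded above.
-/

open Finset

namespace Matrix

variable {n : Type*} [Fintype n]

lemma trace_vecMulVec_mul (u v : n → ℂ) (A : Matrix n n ℂ) :
    (vecMulVec u v * A).trace = v ⬝ᵥ A *ᵥ u := by
  rw [vecMulVec_mul, trace_vecMulVec, dotProduct_comm, dotProduct_mulVec]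

lemma re_star_dotProduct_self (v : n → ℂ) : (star v ⬝ᵥ v).re = ∑ i, ‖v i‖ ^ 2 := by
  simp [dotProduct, Complex.re_sum, Complex.sq_norm, Complex.normSq_apply]

lemma re_trace_conjTranspose_mul_self (B : Matrix n n ℂ) :
    (Bᴴ * B).trace.re = ∑ i, ∑ j, ‖B i j‖ ^ 2 := by
  rw [trace_mul_comm]
  simp [trace, mul_apply, Complex.re_sum, Complex.sq_norm, Complex.normSq_apply]

lemma norm_dotProduct_sq_le (u v : n → ℂ) :
    ‖u ⬝ᵥ v‖ ^ 2 ≤ (∑ i, ‖u i‖ ^ 2) * ∑ i, ‖v i‖ ^ 2 :=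
  calc ‖u ⬝ᵥ v‖ ^ 2 ≤ (∑ i, ‖u i‖ * ‖v i‖) ^ 2 := by
        gcongr; exact (norm_sum_le _ _).trans_eq (by simp_rw [norm_mul])
    _ ≤ _ := sum_mul_sq_le_sq_mul_sq _ _ _

lemma PosSemidef.re_trace_nonneg {A : Matrix n n ℂ} (hA : A.PosSemidef) : 0 ≤ A.trace.re :=
  (Complex.le_def.mp hA.trace_nonneg).1

/-- Writing `A = Bᴴ B`, this is Cauchy–Schwarz applied to each row of `B`. -/
lemma PosSemidef.re_dotProduct_mulVec_le_mul_trace {A : Matrix n n ℂ} (hA : A.PosSemidef)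
    (x : n → ℂ) : (star x ⬝ᵥ A *ᵥ x).re ≤ (∑ i, ‖x i‖ ^ 2) * A.trace.re := by
  classical
  obtain ⟨B, rfl⟩ : ∃ B : Matrix n n ℂ, A = star B * B := by
    open scoped MatrixOrder Matrix.Norms.L2Operator in
    exact CStarAlgebra.nonneg_iff_eq_star_mul_self.mp hA.nonneg
  rw [star_eq_conjTranspose, re_trace_conjTranspose_mul_self, ← mulVec_mulVec, dotProduct_mulVec,
    vecMul_conjTranspose, star_star, re_star_dotProduct_self, mul_sum]
  gcongr with i
  rw [mul_comm]
  exact norm_dotProduct_sq_le (B i) x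

end Matrix

lemma sum_add_eq_of_rescale {ι M : Type*} [Fintype ι] [AddCommGroup M] [Module ℂ M]
    {y : ι → ℝ} {w w' : ι → M} {q q' : M} (hw' : ∀ k, w' k = (y k : ℂ) • w k)
    (hq' : q' = q + ∑ k, ((1 - y k : ℝ) : ℂ) • w k) : ∑ k, w' k + q' = ∑ k, w k + q := by
  rw [hq', add_left_comm, ← sum_add_distrib, add_comm]
  congr 1
  refine sum_congr rfl fun k _ => ?_
  rw [hw', ← add_smul, Complex.ofReal_sub, Complex.ofReal_one, add_sub_cancel, one_smul]

section trR

variable {m : ℕ} (H : Matrix (Fin m) (Fin m) ℂ)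

lemma trR_add (A B : Matrix (Fin m) (Fin m) ℂ) : trR H (A + B) = trR H A + trR H B := by
  rw [trR, trR, trR, Matrix.mul_add, Matrix.trace_add, Complex.add_re]

lemma trR_ofReal_smul (r : ℝ) (A : Matrix (Fin m) (Fin m) ℂ) :
    trR H ((r : ℂ) • A) = r * trR H A := by
  rw [trR, trR, Matrix.mul_smul, Matrix.trace_smul, smul_eq_mul, Complex.re_ofReal_mul]

lemma trR_sum {ι : Type*} (s : Finset ι) (f : ι → Matrix (Fin m) (Fin m) ℂ) :
    trR H (∑ k ∈ s, f k) = ∑ k ∈ s, trR H (f k) := by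
  rw [trR, mul_sum, Matrix.trace_sum, Complex.re_sum]
  rfl

end trR

section Rates

variable {N Nt : ℕ} (h : Fin N → Fin Nt → ℂ) (n : Fin N)

lemma trR_Hmat (A : Matrix (Fin Nt) (Fin Nt) ℂ) :
    trR (Hmat h n) A = (star (h n) ⬝ᵥ A *ᵥ h n).re := by
  rw [trR, Hmat, Matrix.trace_vecMulVec_mul]

lemma trR_Hmat_nonneg {A : Matrix (Fin Nt) (Fin Nt) ℂ} (hA : A.PosSemidef) :
    0 ≤ trR (Hmat h n) A := by
  rw [trR_Hmat]
  exact hA.re_dotProduct_nonneg _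

lemma trR_Hmat_le {A : Matrix (Fin Nt) (Fin Nt) ℂ} (hA : A.PosSemidef) :
    trR (Hmat h n) A ≤ (∑ i, ‖h n i‖ ^ 2) * A.trace.re := by
  rw [trR_Hmat]
  exact hA.re_dotProduct_mulVec_le_mul_trace _

lemma Ru_eq_log_one_add_div_sub (σsq : Fin N → ℝ) (BW : ℝ) (W : Fin N → Matrix (Fin Nt) (Fin Nt) ℂ)
    (Q : Matrix (Fin Nt) (Fin Nt) ℂ) :
    Ru h σsq BW W Q n = BW * Real.log (1 + trR (Hmat h n) (W n) /
      (trR (Hmat h n) ((∑ k, W k) + Q) + σsq n - trR (Hmat h n) (W n))) := by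
  rw [Ru, trR_add, trR_sum, sum_erase_eq_sub (mem_univ n)]
  congr 4
  ring

lemma Ru_eq_of_trR_eq {σsq : Fin N → ℝ} {BW θ : ℝ} {W W' : Fin N → Matrix (Fin Nt) (Fin Nt) ℂ}
    {Q Q' : Matrix (Fin Nt) (Fin Nt) ℂ} (hsum : ∑ k, W' k + Q' = ∑ k, W k + Q) (hθ : 0 < θ)
    (hS : 0 < trR (Hmat h n) ((∑ k, W k) + Q) + σsq n)
    (hx : trR (Hmat h n) (W' n) = θ / (1 + θ) * (trR (Hmat h n) ((∑ k, W k) + Q) + σsq n)) :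
    Ru h σsq BW W' Q' n = BW * Real.log (1 + θ) := by
  rw [Ru_eq_log_one_add_div_sub, hsum, hx]
  congr 3
  field_simp
  ring

lemma Rsec_eq_of_trR_eq {σsq : Fin N → ℝ} {BW : ℝ} (hBW : BW ≠ 0) {Rreq : Fin N → ℝ} {r : ℝ}
    (hr : 0 ≤ r) (hθ : 0 < Real.exp (r / BW + Rreq n / BW) - 1)
    {W W' : Fin N → Matrix (Fin Nt) (Fin Nt) ℂ} {Q Q' : Matrix (Fin Nt) (Fin Nt) ℂ}
    (hsum : ∑ k, W' k + Q' = ∑ k, W k + Q) (hS : 0 < trR (Hmat h n) ((∑ k, W k) + Q) + σsq n)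
    (hx : trR (Hmat h n) (W' n) = (Real.exp (r / BW + Rreq n / BW) - 1) /
      (1 + (Real.exp (r / BW + Rreq n / BW) - 1)) * (trR (Hmat h n) ((∑ k, W k) + Q) + σsq n)) :
    Rsec h σsq BW Rreq W' Q' n = r := by
  have hRu := Ru_eq_of_trR_eq h n (BW := BW) hsum hθ hS hx
  rw [add_sub_cancel, Real.log_exp, mul_add, mul_div_cancel₀ _ hBW, mul_div_cancel₀ _ hBW] at hRu
  rw [Rsec, hRu, add_sub_cancel_right, max_eq_left hr]

lemma Ru_le {σsq : Fin N → ℝ} (hσ : 0 < σsq n) {BW : ℝ} (hBW : 0 ≤ BW)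
    {W : Fin N → Matrix (Fin Nt) (Fin Nt) ℂ} {Q : Matrix (Fin Nt) (Fin Nt) ℂ}
    (hW : ∀ k, (W k).PosSemidef) (hQ : Q.PosSemidef) {P : ℝ} (hP : (W n).trace.re ≤ P) :
    Ru h σsq BW W Q n ≤ BW * Real.log (1 + (∑ i, ‖h n i‖ ^ 2) * P / σsq n) := by
  have hx := trR_Hmat_nonneg h n (hW n)
  have hxP : trR (Hmat h n) (W n) ≤ (∑ i, ‖h n i‖ ^ 2) * P :=
    (trR_Hmat_le h n (hW n)).trans (mul_le_mul_of_nonneg_left hP (by positivity))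
  have hσ_le : σsq n ≤ (∑ k ∈ univ.erase n, trR (Hmat h n) (W k)) + trR (Hmat h n) Q + σsq n := by
    have := sum_nonneg fun k (_ : k ∈ univ.erase n) => trR_Hmat_nonneg h n (hW k)
    linarith [trR_Hmat_nonneg h n hQ]
  refine mul_le_mul_of_nonneg_left (Real.log_le_log ?_ ?_) hBW
  · exact add_pos_of_pos_of_nonneg one_pos (div_nonneg hx (hσ.le.trans hσ_le))
  · exact add_le_add_right (div_le_div₀ (hx.trans hxP) hxP hσ hσ_le) 1

lemma Rsec_le {σsq : Fin N → ℝ} (hσ : 0 < σsq n) {BW : ℝ} (hBW : 0 ≤ BW) {Rreq : Fin N → ℝ}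
    (hRreq : 0 ≤ Rreq n) {W : Fin N → Matrix (Fin Nt) (Fin Nt) ℂ} {Q : Matrix (Fin Nt) (Fin Nt) ℂ}
    (hW : ∀ k, (W k).PosSemidef) (hQ : Q.PosSemidef) {P : ℝ} (hP : (W n).trace.re ≤ P) :
    Rsec h σsq BW Rreq W Q n ≤ BW * Real.log (1 + (∑ i, ‖h n i‖ ^ 2) * P / σsq n) := by
  have hP₀ : 0 ≤ P := (hW n).re_trace_nonneg.trans hP
  refine max_le (by linarith [Ru_le h n hσ hBW hW hQ hP]) (mul_nonneg hBW (Real.log_nonneg ?_))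
  have : 0 ≤ (∑ i, ‖h n i‖ ^ 2) * P / σsq n := by positivity
  linarith

end Rates

section Power

variable {N Nt : ℕ}

lemma sum_re_trace_add_eq {W W' : Fin N → Matrix (Fin Nt) (Fin Nt) ℂ}
    {Q Q' : Matrix (Fin Nt) (Fin Nt) ℂ} (hsum : ∑ k, W' k + Q' = ∑ k, W k + Q) :
    (∑ k, (W' k).trace.re) + Q'.trace.re = (∑ k, (W k).trace.re) + Q.trace.re := by
  simpa [Matrix.trace_add, Matrix.trace_sum, Complex.re_sum] using
    congrArg (fun A => (Matrix.trace A).re) hsum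

lemma Ptot_congr {φamp Pcir : ℝ} {W W' : Fin N → Matrix (Fin Nt) (Fin Nt) ℂ}
    {Q Q' : Matrix (Fin Nt) (Fin Nt) ℂ} (hsum : ∑ k, W' k + Q' = ∑ k, W k + Q) :
    Ptot φamp Pcir W' Q' = Ptot φamp Pcir W Q := by
  rw [Ptot, Ptot, sum_re_trace_add_eq hsum]

lemma le_Ptot {φamp : ℝ} (hφamp : 0 ≤ φamp) (Pcir : ℝ) {W : Fin N → Matrix (Fin Nt) (Fin Nt) ℂ}
    {Q : Matrix (Fin Nt) (Fin Nt) ℂ} (hW : ∀ k, (W k).PosSemidef) (hQ : Q.PosSemidef) :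
    Pcir ≤ Ptot φamp Pcir W Q := by
  unfold Ptot
  exact le_add_of_nonneg_left (mul_nonneg (by positivity)
    (add_nonneg (sum_nonneg fun k _ => (hW k).re_trace_nonneg) hQ.re_trace_nonneg))

lemma re_trace_le_of_sum_le {W : Fin N → Matrix (Fin Nt) (Fin Nt) ℂ}
    {Q : Matrix (Fin Nt) (Fin Nt) ℂ} (hW : ∀ k, (W k).PosSemidef) (hQ : Q.PosSemidef) {P : ℝ}
    (hP : (∑ k, (W k).trace.re) + Q.trace.re ≤ P) (n : Fin N) : (W n).trace.re ≤ P := by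
  have := single_le_sum (fun k _ => (hW k).re_trace_nonneg) (mem_univ n)
  linarith [hQ.re_trace_nonneg]

end Power

lemma rescale_factor_spec {θ S x : ℝ} (hθ : 0 < θ) (hS : 0 < S) (h : (1 + θ) / θ * x ≥ S) :
    0 < θ / (1 + θ) * (S / x) ∧ θ / (1 + θ) * (S / x) ≤ 1 ∧
      θ / (1 + θ) * (S / x) * x = θ / (1 + θ) * S := by
  rw [ge_iff_le, div_mul_eq_mul_div, le_div_iff₀ hθ] at h
  have hx : 0 < x := by nlinarith
  refine ⟨by positivity, ?_, by field_simp⟩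
  rw [← mul_div_assoc, div_le_one hx, div_mul_eq_mul_div, div_le_iff₀ (by positivity)]
  linarith

section Feasibility

variable {N Nt M I : ℕ} {h : Fin N → Fin Nt → ℂ} {σsq : Fin N → ℝ} {BW : ℝ}
  {φv Rreq : Fin N → ℝ} {ge : Fin M → Fin Nt → ℂ} {Θe σe : Fin M → ℝ}
  {gh : Fin I → Fin Nt → ℂ} {Θh Preq ξ : Fin I → ℝ} {Pmax : ℝ}

lemma EHOK_congr {W W' : Fin N → Matrix (Fin Nt) (Fin Nt) ℂ} {Q Q' : Matrix (Fin Nt) (Fin Nt) ℂ}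
    (hsum : ∑ k, W' k + Q' = ∑ k, W k + Q) :
    EHOK gh Θh Preq ξ W' Q' ↔ EHOK gh Θh Preq ξ W Q := by
  rw [EHOK, EHOK, hsum]

/-- The rescaling lowers `Xₙ` by `c (1 - yₙ) Wₙ ⪰ 0`, where `c = 1/(1 - exp(-R̃ₙ)) > 0`. -/
lemma LeakOK.of_rescale (hBW : 0 < BW) (hRreq : ∀ n, 0 < Rreq n) {y : Fin N → ℝ} (hy : ∀ n, y n ≤ 1)
    {W W' : Fin N → Matrix (Fin Nt) (Fin Nt) ℂ} {Q Q' : Matrix (Fin Nt) (Fin Nt) ℂ}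
    (hW : ∀ n, (W n).PosSemidef) (hW' : ∀ n, W' n = (y n : ℂ) • W n)
    (hsum : ∑ k, W' k + Q' = ∑ k, W k + Q) (hleak : LeakOK BW Rreq ge Θe σe W Q) :
    LeakOK BW Rreq ge Θe σe W' Q' := by
  intro m n Δ hΔ
  have hold := hleak m n Δ hΔ
  set c : ℝ := 1 / (1 - Real.exp (-(Rreq n / BW)))
  have hc : 0 ≤ c := by
    have : Real.exp (-(Rreq n / BW)) < 1 :=
      Real.exp_lt_one_iff.2 (neg_lt_zero.2 (div_pos (hRreq n) hBW))
    exact (one_div_pos.2 (by linarith)).le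
  have hX : (c : ℂ) • W' n - ∑ k, W' k - Q' =
      ((c : ℂ) • W n - ∑ k, W k - Q) - ((c * (1 - y n) : ℝ) : ℂ) • W n := by
    rw [sub_sub, sub_sub, hsum, hW' n]
    push_cast
    module
  have hB := (hW n).smul (a := ((c * (1 - y n) : ℝ) : ℂ))
    (Complex.zero_le_real.2 (mul_nonneg hc (sub_nonneg.2 (hy n))))
  have hq : 0 ≤ (star (ge m + Δ) ⬝ᵥ (((c * (1 - y n) : ℝ) : ℂ) • W n) *ᵥ (ge m + Δ)).re :=
    hB.re_dotProduct_nonneg _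
  rw [hX, Matrix.sub_mulVec, dotProduct_sub, Complex.sub_re]
  linarith

lemma feasible15_of_rescale {t : ℝ} (hBW : 0 < BW) (hRreq : ∀ n, 0 < Rreq n) {y : Fin N → ℝ}
    (hy₀ : ∀ n, 0 < y n) (hy₁ : ∀ n, y n ≤ 1) {W W' : Fin N → Matrix (Fin Nt) (Fin Nt) ℂ}
    {Q Q' : Matrix (Fin Nt) (Fin Nt) ℂ} (hW' : ∀ n, W' n = (y n : ℂ) • W n)
    (hQ' : Q' = Q + ∑ k, ((1 - y k : ℝ) : ℂ) • W k)
    (hprop : ∀ m n, φv m * Rsec h σsq BW Rreq W' Q' n = φv n * Rsec h σsq BW Rreq W' Q' m)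
    (hfeas : Feasible21 h σsq BW φv Rreq ge Θe σe gh Θh Preq ξ Pmax W Q t) :
    Feasible15 h σsq BW φv Rreq ge Θe σe gh Θh Preq ξ Pmax W' Q' := by
  obtain ⟨hW, hQ, hrank, -, hleak, hEH, hpow⟩ := hfeas
  have hsum := sum_add_eq_of_rescale hW' hQ'
  refine ⟨fun n => hW' n ▸ (hW n).smul (Complex.zero_le_real.2 (hy₀ n).le),
    hQ' ▸ hQ.add (posSemidef_sum _ fun k _ =>
      (hW k).smul (Complex.zero_le_real.2 (sub_nonneg.2 (hy₁ k)))),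
    fun n => ?_, hprop, LeakOK.of_rescale hBW hRreq hy₁ hW hW' hsum hleak,
    (EHOK_congr hsum).2 hEH, (sum_re_trace_add_eq hsum).trans_le hpow⟩
  rw [hW' n, rank_smul_of_mem_nonZeroDivisors _
    (mem_nonZeroDivisors_of_ne_zero (Complex.ofReal_ne_zero.2 (hy₀ n).ne'))]
  exact hrank n

lemma SEE_eq_of_Rsec_eq {W : Fin N → Matrix (Fin Nt) (Fin Nt) ℂ} {Q : Matrix (Fin Nt) (Fin Nt) ℂ}
    {t : ℝ} (hR : ∀ n, Rsec h σsq BW Rreq W Q n = φv n * t) (hφsum : ∑ n, φv n = 1)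
    (φamp Pcir : ℝ) : SEE h σsq BW Rreq φamp Pcir W Q = t / Ptot φamp Pcir W Q := by
  rw [SEE, sum_congr rfl fun n _ => hR n, ← sum_mul, hφsum, one_mul]

lemma bddAbove_SEE_feasible15 (hσ : ∀ n, 0 < σsq n) (hBW : 0 ≤ BW) (hRreq : ∀ n, 0 ≤ Rreq n)
    {φamp : ℝ} (hφamp : 0 ≤ φamp) {Pcir : ℝ} (hPcir : 0 < Pcir) :
    BddAbove {s : ℝ | ∃ W' Q', Feasible15 h σsq BW φv Rreq ge Θe σe gh Θh Preq ξ Pmax W' Q' ∧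
      s = SEE h σsq BW Rreq φamp Pcir W' Q'} := by
  refine ⟨(∑ n, BW * Real.log (1 + (∑ i, ‖h n i‖ ^ 2) * Pmax / σsq n)) / Pcir, ?_⟩
  rintro s ⟨W, Q, ⟨hW, hQ, -, -, -, -, hP⟩, rfl⟩
  have hsec : 0 ≤ ∑ n, Rsec h σsq BW Rreq W Q n := sum_nonneg fun n _ => le_max_right _ _
  calc SEE h σsq BW Rreq φamp Pcir W Q ≤ (∑ n, Rsec h σsq BW Rreq W Q n) / Pcir :=
        div_le_div_of_nonneg_left hsec hPcir (le_Ptot hφamp Pcir hW hQ)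
    _ ≤ _ := by
        gcongr with n
        exact Rsec_le h n (hσ n) hBW (hRreq n) hW hQ (re_trace_le_of_sum_le hW hQ hP n)

end Feasibility

theorem equiv_15_21_first_direction_general {N Nt M I : ℕ}
    (h : Fin N → Fin Nt → ℂ) (σsq : Fin N → ℝ) (hσ : ∀ n, 0 < σsq n)
    (BW : ℝ) (hBW : 0 < BW)
    (φv : Fin N → ℝ) (hφ : ∀ n, 0 < φv n) (hφsum : ∑ n, φv n = 1)
    (Rreq : Fin N → ℝ) (hRreq : ∀ n, 0 < Rreq n)
    (ge : Fin M → Fin Nt → ℂ) (Θe : Fin M → ℝ)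
    (σe : Fin M → ℝ)
    (gh : Fin I → Fin Nt → ℂ) (Θh : Fin I → ℝ)
    (Preq : Fin I → ℝ)
    (ξ : Fin I → ℝ)
    (Pmax : ℝ)
    (φamp : ℝ) (hφamp : 0 < φamp ∧ φamp ≤ 1) (Pcir : ℝ) (hPcir : 0 < Pcir)
    (W : Fin N → Matrix (Fin Nt) (Fin Nt) ℂ) (Q : Matrix (Fin Nt) (Fin Nt) ℂ)
    (t : ℝ) (ht : 0 ≤ t)
    (hfeas : Feasible21 h σsq BW φv Rreq ge Θe σe gh Θh Preq ξ Pmax W Q t)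
    (y : Fin N → ℝ)
    (hy : ∀ n, y n = ((Real.exp (φv n * t / BW + Rreq n / BW) - 1) /
        (1 + (Real.exp (φv n * t / BW + Rreq n / BW) - 1))) *
        ((trR (Hmat h n) ((∑ k, W k) + Q) + σsq n) / trR (Hmat h n) (W n)))
    (What : Fin N → Matrix (Fin Nt) (Fin Nt) ℂ)
    (hWhat : ∀ n, What n = (y n : ℂ) • W n)
    (Qhat : Matrix (Fin Nt) (Fin Nt) ℂ)
    (hQhat : Qhat = Q + ∑ k, ((1 - y k : ℝ) : ℂ) • W k) :
    Feasible15 h σsq BW φv Rreq ge Θe σe gh Θh Preq ξ Pmax What Qhat ∧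
    (∀ n, Rsec h σsq BW Rreq What Qhat n = φv n * t) ∧
    SEE h σsq BW Rreq φamp Pcir What Qhat = t / Ptot φamp Pcir W Q ∧
    t / Ptot φamp Pcir W Q ≤
      sSup {s : ℝ | ∃ W' Q', Feasible15 h σsq BW φv Rreq ge Θe σe gh Θh Preq ξ Pmax W' Q' ∧
        s = SEE h σsq BW Rreq φamp Pcir W' Q'} := by
  have ⟨hW, hQ, _, h20, _⟩ := hfeas
  have hθ : ∀ n, 0 < Real.exp (φv n * t / BW + Rreq n / BW) - 1 := fun n =>
    sub_pos.2 (Real.one_lt_exp_iff.2 (add_pos_of_nonneg_of_pos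
      (div_nonneg (mul_nonneg (hφ n).le ht) hBW.le) (div_pos (hRreq n) hBW)))
  have hS : ∀ n, 0 < trR (Hmat h n) ((∑ k, W k) + Q) + σsq n := fun n =>
    add_pos_of_nonneg_of_pos
      (trR_Hmat_nonneg h n ((posSemidef_sum _ fun k _ => hW k).add hQ)) (hσ n)
  have hyW := fun n => (hy n).symm ▸ rescale_factor_spec (hθ n) (hS n)
    (by rw [trR_add, trR_sum]; exact h20 n)
  have hsum := sum_add_eq_of_rescale hWhat hQhat
  have hRsec : ∀ n, Rsec h σsq BW Rreq What Qhat n = φv n * t := fun n =>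
    Rsec_eq_of_trR_eq h n hBW.ne' (mul_nonneg (hφ n).le ht) (hθ n) hsum (hS n)
      (by rw [hWhat n, trR_ofReal_smul, (hyW n).2.2])
  have hfeas15 := feasible15_of_rescale hBW hRreq (fun n => (hyW n).1) (fun n => (hyW n).2.1)
    hWhat hQhat (fun m n => by rw [hRsec m, hRsec n]; ring) hfeas
  have hSEE : SEE h σsq BW Rreq φamp Pcir What Qhat = t / Ptot φamp Pcir W Q := by
    rw [SEE_eq_of_Rsec_eq hRsec hφsum, Ptot_congr hsum]
  exact ⟨hfeas15, hRsec, hSEE, le_csSup (bddAbove_SEE_feasible15 hσ hBW.le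
    (fun n => (hRreq n).le) hφamp.1.le hPcir) ⟨What, Qhat, hfeas15, hSEE.symm⟩⟩

/-- Equivalence of problems (15) and (21), first direction: scaling a feasible point of
(21) yields a feasible point of (15) whose secrecy rates are exactly `φ_n t` and whose
secrecy energy efficiency equals `t / P^TOT`; in particular the optimal value of (15) is
at least `t / P^TOT`. -/
theorem equiv_15_21_first_direction {N Nt M I : ℕ} (hN : 0 < N) (hNt : 0 < Nt)
    (h : Fin N → Fin Nt → ℂ) (σsq : Fin N → ℝ) (hσ : ∀ n, 0 < σsq n)
    (BW : ℝ) (hBW : 0 < BW)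
    (φv : Fin N → ℝ) (hφ : ∀ n, 0 < φv n) (hφsum : ∑ n, φv n = 1)
    (Rreq : Fin N → ℝ) (hRreq : ∀ n, 0 < Rreq n)
    (ge : Fin M → Fin Nt → ℂ) (Θe : Fin M → ℝ) (hΘe : ∀ m, 0 < Θe m)
    (σe : Fin M → ℝ) (hσe : ∀ m, 0 < σe m)
    (gh : Fin I → Fin Nt → ℂ) (Θh : Fin I → ℝ) (hΘh : ∀ i, 0 < Θh i)
    (Preq : Fin I → ℝ) (hPreq : ∀ i, 0 < Preq i)
    (ξ : Fin I → ℝ) (hξ : ∀ i, 0 < ξ i ∧ ξ i ≤ 1)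
    (Pmax : ℝ) (hPmax : 0 < Pmax)
    (φamp : ℝ) (hφamp : 0 < φamp ∧ φamp ≤ 1) (Pcir : ℝ) (hPcir : 0 < Pcir)
    (W : Fin N → Matrix (Fin Nt) (Fin Nt) ℂ) (Q : Matrix (Fin Nt) (Fin Nt) ℂ)
    (t : ℝ) (ht : 0 ≤ t)
    (hfeas : Feasible21 h σsq BW φv Rreq ge Θe σe gh Θh Preq ξ Pmax W Q t)
    (y : Fin N → ℝ)
    (hy : ∀ n, y n = ((Real.exp (φv n * t / BW + Rreq n / BW) - 1) /
        (1 + (Real.exp (φv n * t / BW + Rreq n / BW) - 1))) *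
        ((trR (Hmat h n) ((∑ k, W k) + Q) + σsq n) / trR (Hmat h n) (W n)))
    (What : Fin N → Matrix (Fin Nt) (Fin Nt) ℂ)
    (hWhat : ∀ n, What n = (y n : ℂ) • W n)
    (Qhat : Matrix (Fin Nt) (Fin Nt) ℂ)
    (hQhat : Qhat = Q + ∑ k, ((1 - y k : ℝ) : ℂ) • W k) :
    Feasible15 h σsq BW φv Rreq ge Θe σe gh Θh Preq ξ Pmax What Qhat ∧
    (∀ n, Rsec h σsq BW Rreq What Qhat n = φv n * t) ∧
    SEE h σsq BW Rreq φamp Pcir What Qhat = t / Ptot φamp Pcir W Q ∧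
    t / Ptot φamp Pcir W Q ≤
      sSup {s : ℝ | ∃ W' Q', Feasible15 h σsq BW φv Rreq ge Θe σe gh Θh Preq ξ Pmax W' Q' ∧
        s = SEE h σsq BW Rreq φamp Pcir W' Q'} :=
  equiv_15_21_first_direction_general h σsq hσ BW hBW φv hφ hφsum Rreq hRreq ge Θe σe gh Θh Preq ξ
    Pmax φamp hφamp Pcir hPcir W Q t ht hfeas y hy What hWhat Qhat hQhat
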